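/- Define F(C) := 2 ∫_1^{√(1+e^{2C})} √(2C − log(u² − 1)) du. Then F(C) → 0 as C → −∞ and F(C) → ∞ as C → +∞. -/
import Mathlib


open MeasureTheory intervalIntegral Real Filter

noncomputable def F (C : ℝ) : ℝ :=
  2 * ∫ u in (1 : ℝ)..Real.sqrt (1 + Real.exp (2 * C)),
    Real.sqrt (2 * C - Real.log (u ^ 2 - 1))

/-! ### Auxiliary lemmas -/

lemma one_le_sqrt_aux {x : ℝ} (h : 1 ≤ x) : 1 ≤ Real.sqrt x := by
  nlinarith [Real.sq_sqrt (le_trans zero_le_one h), Real.sqrt_nonneg x]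

lemma sqrt_add_le_aux {a b : ℝ} (ha : 0 ≤ a) (hb : 0 ≤ b) :
    Real.sqrt (a + b) ≤ Real.sqrt a + Real.sqrt b := by
  have h1 := Real.sq_sqrt ha
  have h2 := Real.sq_sqrt hb
  have h : a + b ≤ (Real.sqrt a + Real.sqrt b) ^ 2 := by
    nlinarith [Real.sqrt_nonneg a, Real.sqrt_nonneg b]
  calc Real.sqrt (a + b) ≤ Real.sqrt ((Real.sqrt a + Real.sqrt b) ^ 2) :=
        Real.sqrt_le_sqrt h
    _ = Real.sqrt a + Real.sqrt b := Real.sqrt_sq (by positivity)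

/-- The dominating function. -/
noncomputable def G (C : ℝ) (u : ℝ) : ℝ :=
  Real.sqrt (2 * |C|) + Real.sqrt 2 * (u - 1) ^ (-(1/4 : ℝ))

lemma G_nonneg (C u : ℝ) (hu : 1 ≤ u) : 0 ≤ G C u := by
  have h1 : (0:ℝ) ≤ (u - 1) ^ (-(1/4 : ℝ)) := Real.rpow_nonneg (by linarith) _
  have h2 := Real.sqrt_nonneg (2 * |C|)
  have h3 := Real.sqrt_nonneg 2
  unfold G; positivity

lemma pointwise_bound {C u : ℝ} (hu : 1 < u) :
    Real.sqrt (2 * C - Real.log (u ^ 2 - 1)) ≤ G C u := by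
  have ht : (0:ℝ) < u - 1 := by linarith
  rcases le_or_gt (2 * C - Real.log (u ^ 2 - 1)) 0 with h | h
  · rw [Real.sqrt_eq_zero'.2 h]; exact G_nonneg C u hu.le
  have hfac : u ^ 2 - 1 = (u - 1) * (u + 1) := by ring
  have hlog1 : Real.log (u - 1) ≤ Real.log (u ^ 2 - 1) := by
    rw [hfac, Real.log_mul ht.ne' (by linarith)]
    have : (0:ℝ) ≤ Real.log (u + 1) := Real.log_nonneg (by linarith)
    linarith
  have hlog2 : -Real.log (u - 1) ≤ 2 * (u - 1) ^ (-(1/2 : ℝ)) := by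
    have hx : (0:ℝ) < (u - 1) ^ (-(1/2 : ℝ)) := Real.rpow_pos_of_pos ht _
    have h1 : Real.log ((u - 1) ^ (-(1/2 : ℝ))) ≤ (u - 1) ^ (-(1/2 : ℝ)) - 1 :=
      Real.log_le_sub_one_of_pos hx
    rw [Real.log_rpow ht] at h1
    linarith
  have key : 2 * C - Real.log (u ^ 2 - 1) ≤ 2 * |C| + 2 * (u - 1) ^ (-(1/2 : ℝ)) := by
    have : 2 * C ≤ 2 * |C| := by
      have := le_abs_self C; linarith
    linarith
  have h2' : (0:ℝ) ≤ 2 * (u - 1) ^ (-(1/2 : ℝ)) := by positivity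
  calc Real.sqrt (2 * C - Real.log (u ^ 2 - 1))
      ≤ Real.sqrt (2 * |C| + 2 * (u - 1) ^ (-(1/2 : ℝ))) := Real.sqrt_le_sqrt key
    _ ≤ Real.sqrt (2 * |C|) + Real.sqrt (2 * (u - 1) ^ (-(1/2 : ℝ))) :=
        sqrt_add_le_aux (by positivity) h2'
    _ = G C u := by
        unfold G
        congr 1
        rw [Real.sqrt_mul (by norm_num : (0:ℝ) ≤ 2)]
        congr 1
        rw [Real.sqrt_eq_rpow, ← Real.rpow_mul ht.le]
        norm_num

lemma rpow_shift_intervalIntegrable (d : ℝ) :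
    IntervalIntegrable (fun x : ℝ => (x - 1) ^ (-(1/4 : ℝ))) volume 1 d := by
  have h := (intervalIntegral.intervalIntegrable_rpow'
    (show (-1:ℝ) < -(1/4) by norm_num) (a := 0) (b := d - 1)).comp_sub_right 1
  simpa using h

lemma rpow_shift_integral (b : ℝ) :
    ∫ x in (1:ℝ)..b, (x - 1) ^ (-(1/4 : ℝ)) = (4/3) * (b - 1) ^ ((3:ℝ)/4) := by
  have h := intervalIntegral.integral_comp_sub_right
    (a := (1:ℝ)) (b := b) (fun y : ℝ => y ^ (-(1/4 : ℝ))) 1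
  rw [h, show (1:ℝ) - 1 = 0 by norm_num,
    integral_rpow (Or.inl (by norm_num : (-1:ℝ) < -(1/4)))]
  rw [show -(1/4 : ℝ) + 1 = 3/4 by norm_num, Real.zero_rpow (by norm_num)]
  ring

lemma G_intervalIntegrable (C d : ℝ) : IntervalIntegrable (G C) volume 1 d :=
  intervalIntegrable_const.add ((rpow_shift_intervalIntegrable d).const_mul (Real.sqrt 2))

lemma f_measurable (C : ℝ) :
    Measurable fun u : ℝ => Real.sqrt (2 * C - Real.log (u ^ 2 - 1)) := by
  apply Real.continuous_sqrt.measurable.comp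
  exact (measurable_const.sub ((Real.measurable_log).comp
    ((measurable_id.pow_const 2).sub measurable_const)))

lemma f_intervalIntegrable (C : ℝ) {d : ℝ} (hd : 1 ≤ d) :
    IntervalIntegrable (fun u => Real.sqrt (2 * C - Real.log (u ^ 2 - 1))) volume 1 d := by
  apply (G_intervalIntegrable C d).mono_fun
    ((f_measurable C).aestronglyMeasurable)
  have hset : Set.uIoc (1:ℝ) d = Set.Ioc 1 d := Set.uIoc_of_le hd
  filter_upwards [ae_restrict_mem measurableSet_uIoc] with x hx
  rw [hset] at hx
  have h1x : 1 < x := hx.1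
  rw [Real.norm_eq_abs, Real.norm_eq_abs, abs_of_nonneg (Real.sqrt_nonneg _),
    abs_of_nonneg (G_nonneg C x h1x.le)]
  exact pointwise_bound h1x

lemma one_le_b (x : ℝ) (hx : 0 ≤ x) : 1 ≤ Real.sqrt (1 + x) :=
  one_le_sqrt_aux (by linarith)

lemma F_nonneg (C : ℝ) : 0 ≤ F C := by
  unfold F
  have hb : (1:ℝ) ≤ Real.sqrt (1 + Real.exp (2 * C)) := one_le_b _ (Real.exp_pos _).le
  have h : (0:ℝ) ≤ ∫ u in (1:ℝ)..Real.sqrt (1 + Real.exp (2 * C)),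
      Real.sqrt (2 * C - Real.log (u ^ 2 - 1)) :=
    intervalIntegral.integral_nonneg hb
      (fun u _ => Real.sqrt_nonneg (2 * C - Real.log (u ^ 2 - 1)))
  linarith

lemma delta_le (x : ℝ) (hx : 0 ≤ x) : Real.sqrt (1 + x) - 1 ≤ x := by
  have h : Real.sqrt (1 + x) ≤ 1 + x := by
    calc Real.sqrt (1 + x) ≤ Real.sqrt ((1 + x) ^ 2) := Real.sqrt_le_sqrt (by nlinarith)
      _ = 1 + x := Real.sqrt_sq (by linarith)
  linarith

lemma sqrt_le_one_add (x : ℝ) (hx : 0 ≤ x) : Real.sqrt x ≤ 1 + x := by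
  nlinarith [Real.sq_sqrt hx, Real.sqrt_nonneg x]

/-- Upper bound on F for C ≤ 0. -/
lemma F_upper (C : ℝ) (hC : C ≤ 0) :
    F C ≤ 2 * (Real.sqrt (2 * |C|) * (Real.sqrt (1 + Real.exp (2 * C)) - 1)
      + Real.sqrt 2 * ((4/3) * (Real.sqrt (1 + Real.exp (2 * C)) - 1) ^ ((3:ℝ)/4))) := by
  set b := Real.sqrt (1 + Real.exp (2 * C)) with hbdef
  have hb : (1:ℝ) ≤ b := one_le_b _ (Real.exp_pos _).le
  have hmono : (∫ u in (1:ℝ)..b, Real.sqrt (2 * C - Real.log (u ^ 2 - 1)))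
      ≤ ∫ u in (1:ℝ)..b, G C u := by
    apply intervalIntegral.integral_mono_on hb (f_intervalIntegrable C hb)
      (G_intervalIntegrable C b)
    intro u hu
    rcases eq_or_lt_of_le hu.1 with h | h
    · subst h
      have h0 : Real.sqrt (2 * C - Real.log ((1:ℝ) ^ 2 - 1)) = 0 := by
        rw [Real.sqrt_eq_zero']
        norm_num [Real.log_zero]
        linarith
      rw [h0]
      exact G_nonneg C 1 le_rfl
    · exact pointwise_bound h
  have hGint : (∫ u in (1:ℝ)..b, G C u)
      = Real.sqrt (2 * |C|) * (b - 1) + Real.sqrt 2 * ((4/3) * (b - 1) ^ ((3:ℝ)/4)) := by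
    unfold G
    rw [intervalIntegral.integral_add intervalIntegrable_const
      ((rpow_shift_intervalIntegrable b).const_mul (Real.sqrt 2)),
      intervalIntegral.integral_const_mul, intervalIntegral.integral_const,
      rpow_shift_integral b, smul_eq_mul]
    ring
  unfold F
  calc 2 * ∫ u in (1:ℝ)..b, Real.sqrt (2 * C - Real.log (u ^ 2 - 1))
      ≤ 2 * ∫ u in (1:ℝ)..b, G C u := by linarith
    _ = _ := by rw [hGint]

/-- Lower bound on F for 1 ≤ C. -/
lemma F_lower (C : ℝ) (hC : 1 ≤ C) :
    Real.exp (C / 2) - Real.sqrt 2 ≤ F C := by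
  set b := Real.sqrt (1 + Real.exp (2 * C)) with hbdef
  set c := Real.sqrt (1 + Real.exp C) with hcdef
  have hb1 : (1:ℝ) ≤ b := one_le_b _ (Real.exp_pos _).le
  have hc1 : (1:ℝ) ≤ c := one_le_b _ (Real.exp_pos _).le
  have hexp1 : (1:ℝ) ≤ Real.exp C := Real.one_le_exp (by linarith)
  have hs2c : Real.sqrt 2 ≤ c := Real.sqrt_le_sqrt (by linarith)
  have hcb : c ≤ b := Real.sqrt_le_sqrt (by
    have : Real.exp C ≤ Real.exp (2 * C) := Real.exp_le_exp.2 (by linarith)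
    linarith)
  have hs21 : (1:ℝ) ≤ Real.sqrt 2 := one_le_sqrt_aux one_le_two
  set f := fun u : ℝ => Real.sqrt (2 * C - Real.log (u ^ 2 - 1)) with hfdef
  have hint_b : IntervalIntegrable f volume 1 b := f_intervalIntegrable C hb1
  have hint_s2 : IntervalIntegrable f volume 1 (Real.sqrt 2) := f_intervalIntegrable C hs21
  have hint_c : IntervalIntegrable f volume 1 c := f_intervalIntegrable C hc1
  have hint_s2c : IntervalIntegrable f volume (Real.sqrt 2) c := by
    apply hint_c.mono_set
    rw [Set.uIcc_of_le hs2c, Set.uIcc_of_le hc1]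
    exact Set.Icc_subset_Icc hs21 le_rfl
  have hint_cb : IntervalIntegrable f volume c b := by
    apply hint_b.mono_set
    rw [Set.uIcc_of_le hcb, Set.uIcc_of_le hb1]
    exact Set.Icc_subset_Icc hc1 le_rfl
  have hsplit1 : (∫ u in (1:ℝ)..b, f u) = (∫ u in (1:ℝ)..c, f u) + ∫ u in c..b, f u :=
    (intervalIntegral.integral_add_adjacent_intervals hint_c hint_cb).symm
  have hsplit2 : (∫ u in (1:ℝ)..c, f u)
      = (∫ u in (1:ℝ)..(Real.sqrt 2), f u) + ∫ u in (Real.sqrt 2)..c, f u :=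
    (intervalIntegral.integral_add_adjacent_intervals hint_s2 hint_s2c).symm
  have hnn1 : 0 ≤ ∫ u in c..b, f u :=
    intervalIntegral.integral_nonneg hcb (fun u _ => Real.sqrt_nonneg _)
  have hnn2 : 0 ≤ ∫ u in (1:ℝ)..(Real.sqrt 2), f u :=
    intervalIntegral.integral_nonneg hs21 (fun u _ => Real.sqrt_nonneg _)
  have hmain : (c - Real.sqrt 2) * Real.sqrt C ≤ ∫ u in (Real.sqrt 2)..c, f u := by
    have h := intervalIntegral.integral_mono_on (f := fun _ : ℝ => Real.sqrt C) (g := f)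
      hs2c intervalIntegrable_const hint_s2c ?_
    · rw [intervalIntegral.integral_const, smul_eq_mul] at h
      exact h
    · intro u hu
      have hu0 : (0:ℝ) ≤ u := le_trans (by positivity) hu.1
      have h2u : (2:ℝ) ≤ u ^ 2 := by
        have hsq := Real.sq_sqrt (by norm_num : (0:ℝ) ≤ 2)
        nlinarith [hu.1, Real.sqrt_nonneg 2]
      have hub : u ^ 2 ≤ 1 + Real.exp C := by
        have h1 : u ^ 2 ≤ c ^ 2 := by nlinarith [hu.2]
        have h2 : c ^ 2 = 1 + Real.exp C := Real.sq_sqrt (by positivity)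
        linarith
      have hlog : Real.log (u ^ 2 - 1) ≤ C := by
        calc Real.log (u ^ 2 - 1) ≤ Real.log (Real.exp C) := by
              apply Real.log_le_log (by linarith)
              linarith
          _ = C := Real.log_exp C
      apply Real.sqrt_le_sqrt
      linarith
  have hF : 2 * ((c - Real.sqrt 2) * Real.sqrt C) ≤ F C := by
    unfold F
    rw [← hfdef, ← hbdef, hsplit1, hsplit2]
    nlinarith [hmain, hnn1, hnn2]
  have hsqC : (1:ℝ) ≤ Real.sqrt C := one_le_sqrt_aux hC
  have hce : Real.exp (C / 2) ≤ c := by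
    rw [Real.exp_half]
    exact Real.sqrt_le_sqrt (by linarith)
  nlinarith [hF, hsqC, hce, hs2c]

theorem F_limits :
    Filter.Tendsto F Filter.atBot (nhds 0) ∧
    Filter.Tendsto F Filter.atTop Filter.atTop := by
  constructor
  · -- C → -∞
    set δ := fun C : ℝ => Real.sqrt (1 + Real.exp (2 * C)) - 1 with hδdef
    have hδnn : ∀ C, 0 ≤ δ C := fun C => by
      have h := one_le_b (Real.exp (2 * C)) (Real.exp_pos _).le
      simp only [hδdef]; linarith
    have hδle : ∀ C, δ C ≤ Real.exp (2 * C) := fun C =>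
      delta_le _ (Real.exp_pos _).le
    have h2C : Tendsto (fun C : ℝ => Real.exp (2 * C)) atBot (nhds 0) := by
      apply Real.tendsto_exp_atBot.comp
      exact (tendsto_const_mul_atBot_of_pos two_pos).2 tendsto_id
    have hδ0 : Tendsto δ atBot (nhds 0) := by
      have hcont : Tendsto (fun x : ℝ => Real.sqrt (1 + x) - 1) (nhds 0) (nhds 0) := by
        have hc : Continuous fun x : ℝ => Real.sqrt (1 + x) - 1 :=
          (Real.continuous_sqrt.comp (continuous_const.add continuous_id)).sub continuous_const
        have h := hc.tendsto 0
        simpa using h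
      exact hcont.comp h2C
    have hterm2 : Tendsto (fun C => (δ C) ^ ((3:ℝ)/4)) atBot (nhds 0) := by
      have hcont : ContinuousAt (fun x : ℝ => x ^ ((3:ℝ)/4)) 0 :=
        Real.continuousAt_rpow_const 0 _ (Or.inr (by norm_num))
      have h := hcont.tendsto.comp hδ0
      rw [Real.zero_rpow (by norm_num)] at h
      exact h
    have hterm1 : Tendsto (fun C => Real.sqrt (2 * |C|) * δ C) atBot (nhds 0) := by
      have hmaj : Tendsto (fun C : ℝ => Real.exp (2 * C) + (-2 * C) * Real.exp (2 * C))
          atBot (nhds 0) := by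
        have hx : Tendsto (fun C : ℝ => -2 * C) atBot atTop := by
          have h := tendsto_neg_atBot_atTop.comp
            ((tendsto_const_mul_atBot_of_pos two_pos).2 (tendsto_id (α := ℝ)))
          refine h.congr (fun C => by simp [Function.comp]; try ring)
        have h1 : Tendsto (fun C : ℝ => (-2 * C) ^ (1:ℕ) * Real.exp (-(-2 * C)))
            atBot (nhds 0) := (Real.tendsto_pow_mul_exp_neg_atTop_nhds_zero 1).comp hx
        have h1' : Tendsto (fun C : ℝ => (-2 * C) * Real.exp (2 * C)) atBot (nhds 0) := by
          refine h1.congr (fun C => ?_)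
          rw [pow_one]
          ring_nf
        have h := h2C.add h1'
        simpa using h
      apply squeeze_zero' ?_ ?_ hmaj
      · filter_upwards with C
        exact mul_nonneg (Real.sqrt_nonneg _) (hδnn C)
      · filter_upwards [eventually_le_atBot (0:ℝ)] with C hC
        have habs : |C| = -C := abs_of_nonpos hC
        have hb1 : Real.sqrt (2 * |C|) ≤ 1 + 2 * |C| :=
          sqrt_le_one_add _ (by positivity)
        have hmm : Real.sqrt (2 * |C|) * δ C ≤ (1 + 2 * |C|) * Real.exp (2 * C) :=
          mul_le_mul hb1 (hδle C) (hδnn C) (by positivity)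
        calc Real.sqrt (2 * |C|) * δ C ≤ (1 + 2 * |C|) * Real.exp (2 * C) := hmm
          _ = Real.exp (2 * C) + (-2 * C) * Real.exp (2 * C) := by rw [habs]; ring
    have hbound : Tendsto (fun C => 2 * (Real.sqrt (2 * |C|) * δ C
        + Real.sqrt 2 * ((4/3) * (δ C) ^ ((3:ℝ)/4)))) atBot (nhds 0) := by
      have h := (hterm1.add (((hterm2.const_mul ((4:ℝ)/3)).const_mul (Real.sqrt 2)))).const_mul 2
      simpa using h
    apply squeeze_zero' ?_ ?_ hbound
    · filter_upwards with C; exact F_nonneg C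
    · filter_upwards [eventually_le_atBot (0:ℝ)] with C hC
      exact F_upper C hC
  · -- C → +∞
    have h1 : Tendsto (fun C : ℝ => Real.exp (C / 2)) atTop atTop :=
      Real.tendsto_exp_atTop.comp (tendsto_id.atTop_div_const two_pos)
    have h2 : Tendsto (fun C : ℝ => Real.exp (C / 2) - Real.sqrt 2) atTop atTop :=
      tendsto_atTop_add_const_right _ _ h1
    apply tendsto_atTop_mono' atTop ?_ h2
    filter_upwards [eventually_ge_atTop (1:ℝ)] with C hC
    exact F_lower C hC
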